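/- With the setup of the rtop operator as above, the total variance satisfies E‖v − y‖² = ((d−k₁−k₂)/k₂) · Σ_{ℓ=k₁+1}^d y_ℓ², i.e., the variance of the random sparsifier equals (d−k₁−k₂)/k₂ times the squared norm of the tail coordinates of y. -/

import Mathlib

open Finset

/-!
On the head coordinates `v_ℓ = y_ℓ`; on the tail `v_ℓ - y_ℓ = y_ℓ (c·1{ℓ ∈ S} - 1)` with
`c = (d - k₁)/k₂`. A fixed tail coordinate lies in exactly a fraction `1/c` of the `k₂`-subsets of
the tail, so, as `1{ℓ ∈ S}² = 1{ℓ ∈ S}`, the average of `(c·1{ℓ ∈ S} - 1)²` is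
`(c² - 2c)/c + 1 = c - 1`.
-/

namespace Finset

variable {α : Type*} [DecidableEq α]

theorem card_filter_mem_powersetCard_mul_card {t : Finset α} {a : α} (ha : a ∈ t) (k : ℕ) :
    #{S ∈ t.powersetCard k | a ∈ S} * #t = k * #(t.powersetCard k) := by
  obtain _ | j := k
  · simp
  have hcount : #{S ∈ t.powersetCard (j + 1) | a ∈ S} = (#t - 1).choose j := by
    simpa [singleton_subset_iff] using
      card_filter_powersetCard_subset {a} t (j + 1) (singleton_subset_iff.2 ha) (by simp)
  obtain ⟨n, hn⟩ := Nat.exists_eq_add_one.2 (card_pos.2 ⟨a, ha⟩)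
  rw [hcount, card_powersetCard, hn, Nat.add_sub_cancel, mul_comm, Nat.add_one_mul_choose_eq,
    mul_comm]

theorem sum_powersetCard_sq_scaled_indicator_sub_one {K : Type*} [Field K] [CharZero K]
    {t : Finset α} {a : α} (ha : a ∈ t) {k : ℕ} (hk : k ≠ 0) :
    ∑ S ∈ t.powersetCard k, ((#t / k : K) * (if a ∈ S then 1 else 0) - 1) ^ 2 =
      (#(t.powersetCard k) : K) * ((#t - k) / k) := by
  set c : K := #t / k
  have hsq (S : Finset α) : (c * (if a ∈ S then 1 else 0) - 1) ^ 2 =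
      (c ^ 2 - 2 * c) * (if a ∈ S then 1 else 0) + 1 := by
    split_ifs <;> ring
  have hcount : (#{S ∈ t.powersetCard k | a ∈ S} : K) * #t = k * #(t.powersetCard k) :=
    mod_cast card_filter_mem_powersetCard_mul_card ha k
  have ht : (#t : K) ≠ 0 := Nat.cast_ne_zero.2 (card_ne_zero_of_mem ha)
  have hk' : (k : K) ≠ 0 := Nat.cast_ne_zero.2 hk
  simp only [hsq, sum_add_distrib, ← mul_sum, sum_boole, sum_const, nsmul_one]
  rw [show (#{S ∈ t.powersetCard k | a ∈ S} : K) = k * #(t.powersetCard k) / #t by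
    rw [← hcount, mul_div_cancel_right₀ _ ht]]
  simp only [c]
  field_simp
  ring

end Finset

theorem Fin.card_filter_le_val {n m : ℕ} : #{i : Fin n | m ≤ (i : ℕ)} = n - m := by
  have := card_filter_add_card_filter_not (s := univ) (fun i : Fin n => (i : ℕ) < m)
  simp only [not_lt, Fin.card_filter_val_lt, card_univ, Fintype.card_fin] at this
  omega

/-- Total variance of the `rtop_{k₁,k₂}` operator:
`E‖v - y‖² = ((d-k₁-k₂)/k₂) Σ_{ℓ>k₁} y_ℓ²`. -/
theorem stmt_6 (d k₁ k₂ : ℕ) (hk₂ : 1 ≤ k₂) (hk : k₁ + k₂ ≤ d)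
    (y : Fin d → ℝ) :
    let T := (Finset.univ : Finset (Fin d)).filter (fun ℓ : Fin d => k₁ ≤ (ℓ : ℕ))
    let 𝒮 := T.powersetCard k₂
    let v : Finset (Fin d) → Fin d → ℝ := fun S ℓ =>
      y ℓ * ((if (ℓ : ℕ) < k₁ then (1 : ℝ) else 0) +
        (((d : ℝ) - k₁) / k₂) * (if ℓ ∈ S then (1 : ℝ) else 0))
    ((𝒮.card : ℝ)⁻¹) * ∑ S ∈ 𝒮, (∑ ℓ, (v S ℓ - y ℓ) ^ 2) =
      (((d : ℝ) - k₁ - k₂) / k₂) * ∑ ℓ ∈ T, (y ℓ) ^ 2 := by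
  intro T 𝒮 v
  have hTcard : #T = d - k₁ := Fin.card_filter_le_val
  have hT : (#T : ℝ) = d - k₁ := by rw [hTcard, Nat.cast_sub (by omega)]
  have hcoord (S) (hS : S ∈ 𝒮) : ∑ ℓ, (v S ℓ - y ℓ) ^ 2 =
      ∑ ℓ ∈ T, y ℓ ^ 2 * ((#T / k₂ : ℝ) * (if ℓ ∈ S then 1 else 0) - 1) ^ 2 := by
    have hST : S ⊆ T := (mem_powersetCard.1 hS).1
    rw [← sum_subset (subset_univ T)]
    · refine sum_congr rfl fun ℓ hℓ => ?_
      simp only [T, mem_filter] at hℓ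
      simp only [v, hT, if_neg (not_lt.2 hℓ.2)]
      ring
    · intro ℓ _ hℓ
      have hhead : (ℓ : ℕ) < k₁ := by simpa [T] using hℓ
      have hℓS : ℓ ∉ S := fun h => hℓ (hST h)
      simp [v, hhead, hℓS]
  have h𝒮 : (#(T.powersetCard k₂) : ℝ) ≠ 0 :=
    Nat.cast_ne_zero.2 (by rw [card_powersetCard, hTcard]; exact (Nat.choose_pos (by omega)).ne')
  rw [sum_congr rfl hcoord, sum_comm]
  simp only [← mul_sum]
  rw [sum_congr rfl fun ℓ hℓ => by
    rw [sum_powersetCard_sq_scaled_indicator_sub_one hℓ (by omega : k₂ ≠ 0)], hT]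
  rw [← sum_mul, show #𝒮 = #(T.powersetCard k₂) from rfl]
  field_simp
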